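/- Let a, b be integers, e, f rational numbers with exp(N(a,b,e,f)) having all integer entries, and let m = gcd(a,b). Let A be a lower unitriangular integer 4×4 matrix with AᵀJA = J, and write A·N(a,b,e,f)·A⁻¹ = N(a', b', e', f'). Then a' = a and b' = b, and: (i) if ab is even, then e and e' are integers and e' ≡ e (mod m); (ii) if ab is odd, then 2e and 2e' are odd integers and 2e' ≡ 2e (mod 2m). -/

import Mathlib

/-!
Comparing the entries (1,0), (2,1), (2,0) of `N' A = A N` for a lower unitriangular `A` gives
`a' = a`, `b' = b` and `e' = e + A₂₁ a - A₁₀ b`, so `e' - e` lies in `gcd(a, b) ℤ`.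
Since `N⁴ = 0`, the (2,0) entry of `exp N` is `e + ab/2`; its integrality makes `e` an integer
when `ab` is even and `2e` an odd integer when `ab` is odd.
-/

open Matrix

/-- The symplectic form matrix `J`. -/
def Jmat (R : Type*) [Zero R] [One R] [Neg R] : Matrix (Fin 4) (Fin 4) R :=
  !![0, 0, 0, 1;
     0, 0, 1, 0;
     0, -1, 0, 0;
     -1, 0, 0, 0]

/-- The normalized nilpotent matrix `N(a,b,e,f)`. -/
def Nmat {R : Type*} [Zero R] [Neg R] (a b e f : R) : Matrix (Fin 4) (Fin 4) R :=
  !![0, 0, 0, 0;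
     a, 0, 0, 0;
     e, b, 0, 0;
     f, e, -a, 0]

theorem NormedSpace.exp_eq_sum_range_of_pow_eq_zero {𝔸 : Type*} [Ring 𝔸] [Algebra ℚ 𝔸]
    [TopologicalSpace 𝔸] [IsTopologicalRing 𝔸] {x : 𝔸} {n : ℕ} (hx : x ^ n = 0) :
    NormedSpace.exp x = ∑ k ∈ Finset.range n, ((k.factorial : ℚ)⁻¹) • x ^ k := by
  rw [NormedSpace.exp_eq_tsum_rat]
  refine tsum_eq_sum fun k hk => ?_
  obtain ⟨j, rfl⟩ := Nat.exists_eq_add_of_le (not_lt.mp (Finset.mem_range.not.mp hk))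
  rw [pow_add, hx, zero_mul, smul_zero]

theorem Nmat_pow_four {R : Type*} [Ring R] (a b e f : R) : Nmat a b e f ^ 4 = 0 := by
  ext i j
  fin_cases i <;> fin_cases j <;> simp [Nmat, pow_succ, mul_apply, Fin.sum_univ_four]

theorem exp_Nmat_apply_two_zero (a b e f : ℚ) :
    NormedSpace.exp (Nmat a b e f) 2 0 = e + a * b / 2 := by
  rw [NormedSpace.exp_eq_sum_range_of_pow_eq_zero (Nmat_pow_four a b e f)]
  simp [Finset.sum_range_succ, Nmat, pow_succ, one_apply, div_eq_inv_mul, mul_comm]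

theorem Nmat_intertwine_of_lowerUnitriangular {R : Type*} [CommRing R]
    {A : Matrix (Fin 4) (Fin 4) R} (hlow : A.IsLowerTriangular) (hdiag : ∀ i, A i i = 1)
    {a b e f a' b' e' f' : R} (h : Nmat a' b' e' f' * A = A * Nmat a b e f) :
    a' = a ∧ b' = b ∧ e' = e + A 2 1 * a - A 1 0 * b := by
  have entry (i j : Fin 4) := congrFun (congrFun h i) j
  simp only [Nmat, mul_apply, Fin.sum_univ_four] at entry
  have h10 := entry 1 0
  have h21 := entry 2 1
  have h20 := entry 2 0
  have hzero (i j : Fin 4) (hij : i < j) : A i j = 0 := hlow hij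
  simp only [of_apply, cons_val', cons_val_zero, cons_val_fin_one, cons_val_one, cons_val, hdiag,
    hzero, Fin.reduceLT, mul_zero, zero_mul, mul_one, one_mul, add_zero, zero_add] at h10 h21 h20
  exact ⟨h10, h21, by linear_combination h20 - A 1 0 * h21⟩

section HalfIntegers

variable {a b m d n : ℤ} {e e' : ℚ}

theorem exists_int_dvd_sub_of_even (hn : e + a * b / 2 = n) (hab : Even (a * b)) (hd : m ∣ d)
    (he' : e' = e + d) : ∃ E E' : ℤ, e = E ∧ e' = E' ∧ m ∣ E' - E := by
  obtain ⟨k, hk⟩ := hab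
  have hkq : (a * b : ℚ) = 2 * k := by exact_mod_cast hk.trans (two_mul k).symm
  refine ⟨n - k, n - k + d, ?_, ?_, by simpa using hd⟩
  · push_cast; linarith
  · push_cast; linarith

theorem exists_odd_dvd_sub_of_odd (hn : e + a * b / 2 = n) (hab : Odd (a * b)) (hd : m ∣ d)
    (he' : e' = e + d) :
    ∃ E E' : ℤ, 2 * e = E ∧ 2 * e' = E' ∧ Odd E ∧ Odd E' ∧ 2 * m ∣ E' - E := by
  obtain ⟨k, hk⟩ := hab
  refine ⟨2 * n - a * b, 2 * n - a * b + 2 * d, ?_, ?_, ⟨n - k - 1, by omega⟩,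
    ⟨n - k - 1 + d, by omega⟩, by simpa using mul_dvd_mul_left 2 hd⟩
  · push_cast; linarith
  · push_cast; linarith

end HalfIntegers

theorem stmt6_general (a b : ℤ) (e f : ℚ)
    (hint : ∀ i j : Fin 4, ∃ n : ℤ,
      NormedSpace.exp (Nmat ((a : ℤ) : ℚ) ((b : ℤ) : ℚ) e f) i j = (n : ℚ))
    (A : Matrix (Fin 4) (Fin 4) ℤ)
    (hlow : ∀ i j : Fin 4, i < j → A i j = 0)
    (hdiag : ∀ i : Fin 4, A i i = 1)
    (a' b' e' f' : ℚ)
    (hconj : A.map ((↑) : ℤ → ℚ) * Nmat ((a : ℤ) : ℚ) ((b : ℤ) : ℚ) e f *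
        (A.map ((↑) : ℤ → ℚ))⁻¹ = Nmat a' b' e' f') :
    a' = (a : ℚ) ∧ b' = (b : ℚ) ∧
    (Even (a * b) →
      ∃ E E' : ℤ, e = (E : ℚ) ∧ e' = (E' : ℚ) ∧ (Int.gcd a b : ℤ) ∣ E' - E) ∧
    (Odd (a * b) →
      ∃ E E' : ℤ, 2 * e = (E : ℚ) ∧ 2 * e' = (E' : ℚ) ∧ Odd E ∧ Odd E' ∧
        (2 * (Int.gcd a b : ℤ)) ∣ E' - E) := by
  set Aq := A.map ((↑) : ℤ → ℚ)
  have hAq_low : Aq.IsLowerTriangular := fun i j hij => by simp [Aq, hlow i j hij]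
  have hAq_diag (i : Fin 4) : Aq i i = 1 := by simp [Aq, hdiag]
  have hAq_det : IsUnit Aq.det := by
    rw [det_of_isLowerTriangular Aq hAq_low]
    simp [hAq_diag]
  have hintertwine : Nmat a' b' e' f' * Aq = Aq * Nmat (a : ℚ) b e f := by
    rw [← hconj, nonsing_inv_mul_cancel_right _ _ hAq_det]
  obtain ⟨ha', hb', he'⟩ := Nmat_intertwine_of_lowerUnitriangular hAq_low hAq_diag hintertwine
  have he'_shift : e' = e + ((A 2 1 * a - A 1 0 * b : ℤ) : ℚ) := by
    rw [he']; push_cast [Aq, map_apply]; ring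
  have hgcd_dvd : (Int.gcd a b : ℤ) ∣ A 2 1 * a - A 1 0 * b :=
    dvd_sub ((Int.gcd_dvd_left a b).mul_left _) ((Int.gcd_dvd_right a b).mul_left _)
  obtain ⟨n, hn⟩ := hint 2 0
  rw [exp_Nmat_apply_two_zero] at hn
  exact ⟨ha', hb', fun hab => exists_int_dvd_sub_of_even hn hab hgcd_dvd he'_shift,
    fun hab => exists_odd_dvd_sub_of_odd hn hab hgcd_dvd he'_shift⟩

/-- with `a,b ∈ ℤ`, `e,f ∈ ℚ`, `exp(N(a,b,e,f))` integral,
`m = gcd(a,b)`, and `A` a lower unitriangular integral symplectic matrix with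
`A·N(a,b,e,f)·A⁻¹ = N(a',b',e',f')`: then `a' = a`, `b' = b`, and `e ≡ e'` is an
integer mod `m` if `ab` is even, while `2e ≡ 2e'` are odd integers mod `2m` if
`ab` is odd. -/
theorem stmt6 (a b : ℤ) (e f : ℚ)
    (hint : ∀ i j : Fin 4, ∃ n : ℤ,
      NormedSpace.exp (Nmat ((a : ℤ) : ℚ) ((b : ℤ) : ℚ) e f) i j = (n : ℚ))
    (A : Matrix (Fin 4) (Fin 4) ℤ)
    (hlow : ∀ i j : Fin 4, i < j → A i j = 0)
    (hdiag : ∀ i : Fin 4, A i i = 1)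
    (hsymp : Aᵀ * Jmat ℤ * A = Jmat ℤ)
    (a' b' e' f' : ℚ)
    (hconj : A.map ((↑) : ℤ → ℚ) * Nmat ((a : ℤ) : ℚ) ((b : ℤ) : ℚ) e f *
        (A.map ((↑) : ℤ → ℚ))⁻¹ = Nmat a' b' e' f') :
    a' = (a : ℚ) ∧ b' = (b : ℚ) ∧
    (Even (a * b) →
      ∃ E E' : ℤ, e = (E : ℚ) ∧ e' = (E' : ℚ) ∧ (Int.gcd a b : ℤ) ∣ E' - E) ∧
    (Odd (a * b) →
      ∃ E E' : ℤ, 2 * e = (E : ℚ) ∧ 2 * e' = (E' : ℚ) ∧ Odd E ∧ Odd E' ∧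
        (2 * (Int.gcd a b : ℤ)) ∣ E' - E) :=
  stmt6_general a b e f hint A hlow hdiag a' b' e' f' hconj
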